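/- arXiv:2505.02023 — 2 statements merged into one kernel-verified Lean document; each statement's English description precedes it below -/
import Mathlib

section
/- Let B be an n×n Hermitian positive definite complex matrix with diagonal normalization B̂ and potential Γ(B) = tr(B̂^{-1}) − n. Then off(B̂) ≤ Γ(B) · (√(1 + Γ(B)/4) + √(Γ(B)/4))², where off(M) := Σ_{i≠j} |m_{ij}|². -/
open Matrix
open scoped ComplexOrder

noncomputable section

/-- `D_B^{1/2}`: the diagonal matrix whose entries are the square roots of the
diagonal entries of `B`. -/
def sqrtDiag {n : ℕ} (B : Matrix (Fin n) (Fin n) ℂ) : Matrix (Fin n) (Fin n) ℂ :=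
  Matrix.diagonal fun i => (Real.sqrt (B i i).re : ℂ)

/-- The diagonal normalization `B̂ = D_B^{-1/2} B D_B^{-1/2}`. -/
def hatM {n : ℕ} (B : Matrix (Fin n) (Fin n) ℂ) : Matrix (Fin n) (Fin n) ℂ :=
  (sqrtDiag B)⁻¹ * B * (sqrtDiag B)⁻¹

/-- The potential function `Γ(B) = tr(B̂⁻¹) − n` (a real number for Hermitian
positive definite `B`). -/
def Gamma {n : ℕ} (B : Matrix (Fin n) (Fin n) ℂ) : ℝ :=
  (Matrix.trace ((hatM B)⁻¹)).re - n

/-- `off(M) = Σ_{i ≠ j} |m_{ij}|²`, the squared Frobenius distance to the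
nearest diagonal matrix. -/
def off {n : ℕ} (M : Matrix (Fin n) (Fin n) ℂ) : ℝ :=
  ∑ p ∈ (Finset.univ : Finset (Fin n)).offDiag, ‖M p.1 p.2‖ ^ 2

/-!
`B̂` is positive definite with unit diagonal, so its eigenvalues `μᵢ > 0` satisfy `∑ μᵢ = n`.
Hence `off(B̂) = ‖B̂‖_F² - n = ∑ (μᵢ - 1)²` and `Γ(B) = ∑ μᵢ⁻¹ - n = ∑ (μᵢ - 1)² / μᵢ`.
Every summand of the latter is at most `Γ`, and `(μ - 1)² ≤ Γ μ` confines `μ` below the larger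
root `(√(1 + Γ/4) + √(Γ/4))²` of `y² - (2 + Γ) y + 1`; so
`∑ (μᵢ - 1)² = ∑ μᵢ · (μᵢ - 1)² / μᵢ ≤ (max μ) · Γ`.
-/

theorem le_sq_sqrt_add_sqrt_of_sq_sub_one_le {x g : ℝ} (hx : 0 < x) (h : (x - 1) ^ 2 ≤ g * x) :
    x ≤ (√(1 + g / 4) + √(g / 4)) ^ 2 := by
  have hg : 0 ≤ g := nonneg_of_mul_nonneg_left ((sq_nonneg _).trans h) hx
  have ha : √(1 + g / 4) ^ 2 = 1 + g / 4 := Real.sq_sqrt (by positivity)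
  have hb : √(g / 4) ^ 2 = g / 4 := Real.sq_sqrt (by positivity)
  have hab := mul_nonneg (Real.sqrt_nonneg (1 + g / 4)) (Real.sqrt_nonneg (g / 4))
  -- `x` lies between the roots `(√(1 + g/4) ± √(g/4))²` of `y² - (2 + g) y + 1`
  by_contra! hlt
  have hgt : (√(1 + g / 4) - √(g / 4)) ^ 2 < x := by nlinarith
  nlinarith [mul_pos (sub_pos.mpr hlt) (sub_pos.mpr hgt)]

section Eigenvalues

variable {ι : Type*} [Fintype ι] {μ : ι → ℝ}

theorem sum_sub_one_sq_le (hμ : ∀ i, 0 < μ i) {g : ℝ} (hg : ∑ i, (μ i - 1) ^ 2 / μ i = g) :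
    ∑ i, (μ i - 1) ^ 2 ≤ g * (√(1 + g / 4) + √(g / 4)) ^ 2 := by
  have hterm_nonneg (i : ι) : 0 ≤ (μ i - 1) ^ 2 / μ i := by have := hμ i; positivity
  have hμ_le (i : ι) : μ i ≤ (√(1 + g / 4) + √(g / 4)) ^ 2 := by
    refine le_sq_sqrt_add_sqrt_of_sq_sub_one_le (hμ i) ((div_le_iff₀ (hμ i)).mp ?_)
    exact hg ▸ Finset.single_le_sum (fun j _ ↦ hterm_nonneg j) (Finset.mem_univ i)
  calc ∑ i, (μ i - 1) ^ 2 = ∑ i, μ i * ((μ i - 1) ^ 2 / μ i) := by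
        congr! 1 with i; rw [mul_div_cancel₀ _ (hμ i).ne']
    _ ≤ ∑ i, (√(1 + g / 4) + √(g / 4)) ^ 2 * ((μ i - 1) ^ 2 / μ i) := by
        gcongr with i; exacts [hterm_nonneg i, hμ_le i]
    _ = g * (√(1 + g / 4) + √(g / 4)) ^ 2 := by rw [← Finset.mul_sum, hg, mul_comm]

variable (hsum : ∑ i, μ i = Fintype.card ι)
include hsum

theorem sum_sub_one_sq_eq_of_sum_eq_card :
    ∑ i, (μ i - 1) ^ 2 = ∑ i, μ i ^ 2 - Fintype.card ι := by
  have h (i : ι) : (μ i - 1) ^ 2 = μ i ^ 2 - 2 * μ i + 1 := by ring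
  simp only [h, Finset.sum_add_distrib, Finset.sum_sub_distrib, ← Finset.mul_sum, hsum,
    Finset.sum_const, Finset.card_univ, nsmul_eq_mul, mul_one]
  ring

theorem sum_sub_one_sq_div_eq_of_sum_eq_card (hμ : ∀ i, μ i ≠ 0) :
    ∑ i, (μ i - 1) ^ 2 / μ i = ∑ i, (μ i)⁻¹ - Fintype.card ι := by
  have h (i : ι) : (μ i - 1) ^ 2 / μ i = μ i - 2 + (μ i)⁻¹ := by
    have := hμ i; field_simp; ring
  simp only [h, Finset.sum_add_distrib, Finset.sum_sub_distrib, hsum, Finset.sum_const,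
    Finset.card_univ, nsmul_eq_mul]
  ring

end Eigenvalues

namespace Matrix

open Unitary

variable {𝕜 ι : Type*} [RCLike 𝕜] [Fintype ι] [DecidableEq ι] {A : Matrix ι ι 𝕜}

theorem IsHermitian.trace_cfc (hA : A.IsHermitian) (f : ℝ → ℝ) :
    (cfc f A).trace = ∑ i, (f (hA.eigenvalues i) : 𝕜) := by
  rw [hA.cfc_eq, IsHermitian.cfc, conjStarAlgAut_apply, trace_mul_cycle,
    coe_star_mul_self, one_mul, trace_diagonal]
  rfl

theorem IsHermitian.sum_norm_sq_eq_sum_eigenvalues_sq (hA : A.IsHermitian) :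
    ∑ i, ∑ j, ‖A i j‖ ^ 2 = ∑ i, hA.eigenvalues i ^ 2 := by
  have hentry (i j : ι) : RCLike.re (A i j * A j i) = ‖A i j‖ ^ 2 := by
    rw [← hA.apply j i, RCLike.star_def, RCLike.mul_conj]
    norm_cast
  have htrace := congrArg RCLike.re (hA.trace_cfc (· ^ 2))
  rw [cfc_pow_id A 2 hA.isSelfAdjoint, sq A] at htrace
  simpa [trace, mul_apply, hentry] using htrace

theorem IsHermitian.trace_inv (hA : A.IsHermitian) (hA_unit : IsUnit A) :
    A⁻¹.trace = ∑ i, ((hA.eigenvalues i)⁻¹ : 𝕜) := by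
  rw [nonsing_inv_eq_ringInverse, ← cfc_ringInverse_id (R := ℝ) A hA_unit hA.isSelfAdjoint,
    hA.trace_cfc]
  push_cast; rfl

end Matrix

section Normalization

variable {n : ℕ} {B : Matrix (Fin n) (Fin n) ℂ}

theorem inv_sqrtDiag (hB : ∀ i, 0 < (B i i).re) :
    (sqrtDiag B)⁻¹ = diagonal fun i ↦ (((√(B i i).re)⁻¹ : ℝ) : ℂ) := by
  refine inv_eq_right_inv ?_
  rw [sqrtDiag, diagonal_mul_diagonal, ← diagonal_one]
  congr 1
  funext i
  have : √(B i i).re ≠ 0 := (Real.sqrt_pos.mpr (hB i)).ne'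
  push_cast
  exact mul_inv_cancel₀ (Complex.ofReal_ne_zero.mpr this)

variable (hB : B.PosDef)
include hB

theorem re_apply_self_pos (i : Fin n) : 0 < (B i i).re :=
  (Complex.pos_iff.mp hB.diag_pos).1

theorem hatM_eq_diagonal_mul_mul_star :
    hatM B = (diagonal fun i ↦ (((√(B i i).re)⁻¹ : ℝ) : ℂ)) * B *
      star (diagonal fun i ↦ (((√(B i i).re)⁻¹ : ℝ) : ℂ)) := by
  rw [hatM, inv_sqrtDiag (re_apply_self_pos hB), star_eq_conjTranspose, diagonal_conjTranspose]
  congr! 3 with i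
  exact (Complex.conj_ofReal _).symm

theorem posDef_hatM : (hatM B).PosDef := by
  rw [hatM_eq_diagonal_mul_mul_star hB, IsUnit.posDef_star_right_conjugate_iff]
  · exact hB
  · refine isUnit_diagonal.mpr (Pi.isUnit_iff.mpr fun i ↦ ?_)
    simpa using (Real.sqrt_pos.mpr (re_apply_self_pos hB i)).ne'

theorem hatM_apply (i j : Fin n) :
    hatM B i j = (((√(B i i).re)⁻¹ : ℝ) : ℂ) * B i j * (((√(B j j).re)⁻¹ : ℝ) : ℂ) := by
  rw [hatM, inv_sqrtDiag (re_apply_self_pos hB), mul_diagonal, diagonal_mul]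

theorem hatM_apply_self (i : Fin n) : hatM B i i = 1 := by
  obtain ⟨r, hr⟩ : ∃ r : ℝ, B i i = r := ⟨_, (hB.1.coe_re_apply_self i).symm⟩
  have hr_pos : 0 < r := by simpa [hr] using re_apply_self_pos hB i
  rw [hatM_apply hB, hr, Complex.ofReal_re]
  norm_cast
  field_simp
  exact (Real.sq_sqrt hr_pos.le).symm

end Normalization

theorem off_eq_sum_norm_sq_sub {n : ℕ} (M : Matrix (Fin n) (Fin n) ℂ) :
    off M = ∑ i, ∑ j, ‖M i j‖ ^ 2 - ∑ i, ‖M i i‖ ^ 2 := by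
  rw [off, ← Finset.sum_product' (f := fun i j ↦ ‖M i j‖ ^ 2), ← Finset.diag_union_offDiag,
    Finset.sum_union (Finset.disjoint_diag_offDiag _), Finset.sum_diag]
  ring

/-- For Hermitian positive definite `B`,
`off(B̂) ≤ Γ(B)·(√(1 + Γ(B)/4) + √(Γ(B)/4))²`. -/
theorem off_hat_le_of_gamma {n : ℕ} (B : Matrix (Fin n) (Fin n) ℂ) (hB : B.PosDef) :
    off (hatM B) ≤ Gamma B * (Real.sqrt (1 + Gamma B / 4) + Real.sqrt (Gamma B / 4)) ^ 2 := by
  have hA := posDef_hatM hB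
  have hH := hA.isHermitian
  have hμ_pos := hH.posDef_iff_eigenvalues_pos.mp hA
  set μ := hH.eigenvalues
  have hsum : ∑ i, μ i = Fintype.card (Fin n) := by
    have := congrArg Complex.re hH.trace_eq_sum_eigenvalues
    simpa [trace, hatM_apply_self hB] using this.symm
  have hoff : off (hatM B) = ∑ i, (μ i - 1) ^ 2 := by
    rw [sum_sub_one_sq_eq_of_sum_eq_card hsum, off_eq_sum_norm_sq_sub,
      hH.sum_norm_sq_eq_sum_eigenvalues_sq]
    simp [μ, hatM_apply_self hB]
  have hGamma : ∑ i, (μ i - 1) ^ 2 / μ i = Gamma B := by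
    rw [sum_sub_one_sq_div_eq_of_sum_eq_card hsum (fun i ↦ (hμ_pos i).ne'), Gamma,
      hH.trace_inv hA.isUnit]
    simp [μ]
  rw [hoff]
  exact sum_sub_one_sq_le hμ_pos hGamma
end
end

section
/- Consider the finite-arithmetic generalized two-sided factorization process with randomized size-k pivoting: J_0, J_1, … are independent uniformly random size-k subsets of [n]; B̃^{(t)}, B̃^{(t+1/3)}, B̃^{(t+2/3)} are Hermitian positive definite matrices with positive diagonals, adapted to the pivot history, such that B̃^{(t+2/3)} is obtained from B̃^{(t+1/3)} by one exact pivot step with pivot set J_t (conjugation by a transformation diagonalizing the J_t×J_t block). Define X_t = Γ(B̃^{(t+2/3)})/Γ(B̃^{(t+1/3)}) and Y_{t₁,t₂} = Π_{t=t₁}^{t₂} X_t (with Y_{t₁,t₂}=1 if t₂<t₁), and C = 1 − k(k−1)/(n(n−1)). Then for every index t₁, the process { C^{t₁−1−t} Y_{t₁,t} }_{t≥t₁} is a nonnegative martingale with respect to the filtration generated by the pivots. -/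
open Matrix
open scoped ComplexOrder

noncomputable section

/-- The set of pivot sets: size-`k` subsets of `[n]`. -/
abbrev PivotSet (n k : ℕ) := {J : Finset (Fin n) // J.card = k}

/-- `B_{JJ}`: the `k × k` principal submatrix of `B` on the rows and columns indexed by `J`
(listed in increasing order). -/
def subJ {n k : ℕ} (J : Finset (Fin n)) (hJ : J.card = k) (B : Matrix (Fin n) (Fin n) ℂ) :
    Matrix (Fin k) (Fin k) ℂ :=
  B.submatrix (fun a => ((J.orderIsoOfFin hJ) a).val) (fun a => ((J.orderIsoOfFin hJ) a).val)

/-- The `n × n` matrix which is `S` on the `J × J` block (after the order-preserving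
identification of `J` with `{1, …, k}`) and agrees with the identity elsewhere; this is
`P_σ* [[S, 0], [0, I]] P_σ` for the order-preserving permutation `σ` with `σ(J) = [k]`. -/
def embedJ {n k : ℕ} (J : Finset (Fin n)) (hJ : J.card = k) (S : Matrix (Fin k) (Fin k) ℂ) :
    Matrix (Fin n) (Fin n) ℂ :=
  Matrix.of fun a b =>
    if ha : a ∈ J then
      if hb : b ∈ J then
        S ((J.orderIsoOfFin hJ).symm ⟨a, ha⟩) ((J.orderIsoOfFin hJ).symm ⟨b, hb⟩)
      else 0
    else if a = b then 1 else 0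

/-!
Write `Γ(B) = Re ∑ᵢ Bᵢᵢ (B⁻¹)ᵢᵢ − n`. A pivot on `J` conjugates `B` by a matrix which is `S` on
the `J`-block and the identity elsewhere, so the terms with `i ∉ J` do not change. Because the new
`J`-block is diagonal, the terms with `i ∈ J` add up to `tr (B'_JJ (B'⁻¹)_JJ)`, which is invariant
under the conjugation and equals `∑_{i,j ∈ J} Bᵢⱼ (B⁻¹)ⱼᵢ`. Hence the pivot raises `Γ` by the
off-diagonal part `∑_{i ≠ j ∈ J} Re Bᵢⱼ (B⁻¹)ⱼᵢ`. A pair `i ≠ j` lies in a fraction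
`k(k−1)/(n(n−1))` of all pivot sets, and the sum over all pairs is `tr (B B⁻¹) − ∑ᵢ Bᵢᵢ (B⁻¹)ᵢᵢ =
−Γ(B)`, so a uniform pivot multiplies `Γ` by `C` on average; by adaptedness this is the martingale
property. Nonnegativity comes from `Bᵢᵢ (B⁻¹)ᵢᵢ ≥ 1`, the determinant of a `2 × 2` principal
minor of the positive semidefinite matrix `[[B, 1], [1, B⁻¹]]`.
-/

open Finset

lemma Matrix.PosDef.one_le_re_mul_inv_apply_self {ι : Type*} [Fintype ι] [DecidableEq ι]
    {B : Matrix ι ι ℂ} (hB : B.PosDef) (i : ι) : 1 ≤ (B i i * B⁻¹ i i).re := by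
  have := hB.isUnit.invertible
  have hblock : (fromBlocks B 1 1ᴴ B⁻¹).PosSemidef := by
    rw [hB.fromBlocks₁₁, conjTranspose_one, Matrix.one_mul, Matrix.mul_one, sub_self]
    exact PosSemidef.zero
  have hdet := (hblock.submatrix ![Sum.inl i, Sum.inr i]).det_nonneg
  rw [det_fin_two] at hdet
  simp only [submatrix_apply, Matrix.cons_val_zero, Matrix.cons_val_one, fromBlocks_apply₁₁,
    fromBlocks_apply₁₂, fromBlocks_apply₂₁, fromBlocks_apply₂₂, conjTranspose_one, one_apply_eq,
    one_mul, sub_nonneg] at hdet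
  simpa using (Complex.le_def.mp hdet).1

lemma Finset.sum_sum_eq_sum_add_sum_offDiag {ι M : Type*} [DecidableEq ι] [AddCommMonoid M]
    (s : Finset ι) (f : ι → ι → M) :
    ∑ i ∈ s, ∑ j ∈ s, f i j = ∑ i ∈ s, f i i + ∑ p ∈ s.offDiag, f p.1 p.2 := by
  rw [← sum_product' (f := f), ← diag_union_offDiag, sum_union (disjoint_diag_offDiag s), diag,
    sum_map]
  rfl

lemma Finset.sum_powersetCard_sum_offDiag {ι M : Type*} [Fintype ι] [DecidableEq ι]
    [AddCommMonoid M] {k : ℕ} (hk : 2 ≤ k) (f : ι × ι → M) :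
    ∑ J ∈ powersetCard k univ, ∑ p ∈ J.offDiag, f p =
      (Fintype.card ι - 2).choose (k - 2) • ∑ p ∈ univ.offDiag, f p := by
  rw [sum_comm' (t' := univ.offDiag)
    (s' := fun p => (powersetCard k univ).filter ({p.1, p.2} ⊆ ·)), smul_sum]
  · refine sum_congr rfl fun p hp => ?_
    have hcard : #{p.1, p.2} = 2 := card_pair (mem_offDiag.mp hp).2.2
    rw [sum_const, card_filter_powersetCard_subset _ _ _ (subset_univ _) (hcard ▸ hk), card_univ,
      hcard]
  · intro J p
    simp only [mem_powersetCard_univ, mem_offDiag, mem_filter, insert_subset_iff,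
      singleton_subset_iff, mem_univ, true_and]
    tauto

lemma Nat.cast_choose_sub_two_mul {n k : ℕ} (hk : 2 ≤ k) :
    ((n - 2).choose (k - 2) : ℝ) * (n * (n - 1)) = n.choose k * (k * (k - 1)) := by
  have h := congrArg (Nat.cast : ℕ → ℝ) (Nat.choose_mul (n := n) hk)
  push_cast [Nat.cast_choose_two] at h
  linarith

section Trace

variable {ι R : Type*} [Fintype ι] [DecidableEq ι] [CommRing R]

lemma Matrix.trace_mul_of_isDiag {D : Matrix ι ι R} (hD : D.IsDiag) (M : Matrix ι ι R) :
    trace (D * M) = ∑ i, D i i * M i i := by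
  rw [← hD.diagonal_diag]
  simp [trace, diagonal_mul]

lemma Matrix.trace_mul_mul_mul_inv {P Q : Matrix ι ι R} (hP : IsUnit P.det) (hQ : IsUnit Q.det)
    (A C : Matrix ι ι R) : trace (P * A * Q * (Q⁻¹ * C * P⁻¹)) = trace (A * C) := by
  calc trace (P * A * Q * (Q⁻¹ * C * P⁻¹)) = trace (P * (A * C) * P⁻¹) := by
        simp only [Matrix.mul_assoc, mul_nonsing_inv_cancel_left _ _ hQ]
    _ = trace (A * C) := by rw [trace_mul_cycle, nonsing_inv_mul _ hP, Matrix.one_mul]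

lemma Matrix.sum_offDiag_mul_apply (M N : Matrix ι ι R) :
    ∑ p ∈ univ.offDiag, M p.1 p.2 * N p.2 p.1 = trace (M * N) - ∑ i, M i i * N i i := by
  rw [eq_sub_iff_add_eq', ← sum_sum_eq_sum_add_sum_offDiag univ fun i j => M i j * N j i]
  simp [trace, mul_apply]

end Trace

section Gamma

variable {n : ℕ} {B : Matrix (Fin n) (Fin n) ℂ}

lemma Gamma_eq_re_sum_mul_inv_apply_self (hB : B.PosDef) :
    Gamma B = (∑ i, B i i * B⁻¹ i i).re - n := by
  have hdiag : ∀ i, 0 < (B i i).re := fun i => (Complex.pos_iff.mp hB.diag_pos).1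
  have hsq : ∀ i, (√(B i i).re * √(B i i).re : ℂ) = B i i := fun i => by
    rw [← Complex.ofReal_mul, Real.mul_self_sqrt (hdiag i).le]
    exact hB.isHermitian.coe_re_apply_self i
  have hD : IsUnit (sqrtDiag B).det := by
    simp [sqrtDiag, det_diagonal, prod_ne_zero_iff, Real.sqrt_ne_zero'.mpr (hdiag _)]
  rw [Gamma, hatM, Matrix.mul_inv_rev, Matrix.mul_inv_rev, nonsing_inv_nonsing_inv _ hD]
  simp only [sqrtDiag, trace, diag_apply, diagonal_mul, mul_diagonal]
  congr 2
  refine sum_congr rfl fun i _ => ?_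
  linear_combination B⁻¹ i i * hsq i

lemma Gamma_nonneg (hB : B.PosDef) : 0 ≤ Gamma B := by
  rw [Gamma_eq_re_sum_mul_inv_apply_self hB, Complex.re_sum, sub_nonneg]
  simpa using sum_le_sum fun i (_ : i ∈ univ) => hB.one_le_re_mul_inv_apply_self i

end Gamma

section Embedding

variable {n k : ℕ} (J : Finset (Fin n)) (hJ : J.card = k)

lemma sum_orderIsoOfFin {M : Type*} [AddCommMonoid M] (f : Fin n → M) :
    ∑ x : Fin k, f (J.orderIsoOfFin hJ x) = ∑ i ∈ J, f i := by
  rw [← sum_coe_sort J f]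
  exact Equiv.sum_comp (J.orderIsoOfFin hJ).toEquiv fun c : J => f c

lemma subJ_apply (M : Matrix (Fin n) (Fin n) ℂ) (x y : Fin k) :
    subJ J hJ M x y = M (J.orderIsoOfFin hJ x) (J.orderIsoOfFin hJ y) := rfl

lemma subJ_conjTranspose (M : Matrix (Fin n) (Fin n) ℂ) : subJ J hJ Mᴴ = (subJ J hJ M)ᴴ := rfl

lemma subJ_one : subJ J hJ 1 = 1 :=
  submatrix_one _ (Subtype.val_injective.comp (J.orderIsoOfFin hJ).injective)

lemma eq_of_subJ_eq {M N : Matrix (Fin n) (Fin n) ℂ} (hsub : subJ J hJ M = subJ J hJ N)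
    (hout : ∀ a b, a ∉ J ∨ b ∉ J → M a b = N a b) : M = N := by
  ext a b
  by_cases h : a ∈ J ∧ b ∈ J
  · obtain ⟨x, rfl⟩ : ∃ x, (J.orderIsoOfFin hJ x : Fin n) = a :=
      ⟨(J.orderIsoOfFin hJ).symm ⟨a, h.1⟩, by simp⟩
    obtain ⟨y, rfl⟩ : ∃ y, (J.orderIsoOfFin hJ y : Fin n) = b :=
      ⟨(J.orderIsoOfFin hJ).symm ⟨b, h.2⟩, by simp⟩
    exact congrFun₂ hsub x y
  · exact hout a b (not_and_or.mp h)

variable (S T : Matrix (Fin k) (Fin k) ℂ)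

lemma subJ_embedJ : subJ J hJ (embedJ J hJ S) = S := by
  ext x y
  simp only [subJ, embedJ, submatrix_apply, of_apply, Subtype.coe_eta, OrderIso.symm_apply_apply]
  rw [dif_pos (J.orderIsoOfFin hJ x).2, dif_pos (J.orderIsoOfFin hJ y).2]

lemma embedJ_apply_orderIsoOfFin (x y : Fin k) :
    embedJ J hJ S (J.orderIsoOfFin hJ x) (J.orderIsoOfFin hJ y) = S x y :=
  congrFun₂ (subJ_embedJ J hJ S) x y

lemma embedJ_apply_of_notMem_left {a : Fin n} (ha : a ∉ J) (b : Fin n) :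
    embedJ J hJ S a b = (1 : Matrix (Fin n) (Fin n) ℂ) a b := by
  simp [embedJ, ha, one_apply]

lemma embedJ_apply_of_notMem_right (a : Fin n) {b : Fin n} (hb : b ∉ J) :
    embedJ J hJ S a b = (1 : Matrix (Fin n) (Fin n) ℂ) a b := by
  by_cases ha : a ∈ J
  · simp [embedJ, ha, hb, one_apply_ne (ne_of_mem_of_not_mem ha hb)]
  · exact embedJ_apply_of_notMem_left J hJ S ha b

lemma embedJ_mul_apply_of_notMem (A : Matrix (Fin n) (Fin n) ℂ) {a : Fin n} (ha : a ∉ J)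
    (b : Fin n) : (embedJ J hJ S * A) a b = A a b := by
  simp_rw [mul_apply, embedJ_apply_of_notMem_left J hJ S ha, ← mul_apply, Matrix.one_mul]

lemma mul_embedJ_apply_of_notMem (A : Matrix (Fin n) (Fin n) ℂ) (a : Fin n) {b : Fin n}
    (hb : b ∉ J) : (A * embedJ J hJ S) a b = A a b := by
  simp_rw [mul_apply, embedJ_apply_of_notMem_right J hJ S _ hb, ← mul_apply, Matrix.mul_one]

lemma subJ_embedJ_mul (A : Matrix (Fin n) (Fin n) ℂ) :
    subJ J hJ (embedJ J hJ S * A) = S * subJ J hJ A := by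
  ext x y
  rw [subJ_apply, mul_apply, mul_apply, ← sum_subset (subset_univ J), ← sum_orderIsoOfFin J hJ]
  · simp only [embedJ_apply_orderIsoOfFin, subJ_apply]
  · intro c _ hc
    rw [embedJ_apply_of_notMem_right J hJ S _ hc,
      one_apply_ne (ne_of_mem_of_not_mem (J.orderIsoOfFin hJ x).2 hc), zero_mul]

lemma subJ_mul_embedJ (A : Matrix (Fin n) (Fin n) ℂ) :
    subJ J hJ (A * embedJ J hJ S) = subJ J hJ A * S := by
  ext x y
  rw [subJ_apply, mul_apply, mul_apply, ← sum_subset (subset_univ J), ← sum_orderIsoOfFin J hJ]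
  · simp only [embedJ_apply_orderIsoOfFin, subJ_apply]
  · intro c _ hc
    rw [embedJ_apply_of_notMem_left J hJ S hc,
      one_apply_ne (ne_of_mem_of_not_mem (J.orderIsoOfFin hJ y).2 hc).symm, mul_zero]

lemma embedJ_mul : embedJ J hJ S * embedJ J hJ T = embedJ J hJ (S * T) := by
  refine eq_of_subJ_eq J hJ (by rw [subJ_embedJ_mul, subJ_embedJ, subJ_embedJ]) ?_
  rintro a b (ha | hb)
  · rw [embedJ_mul_apply_of_notMem J hJ _ _ ha, embedJ_apply_of_notMem_left J hJ _ ha,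
      embedJ_apply_of_notMem_left J hJ _ ha]
  · rw [mul_embedJ_apply_of_notMem J hJ _ _ _ hb, embedJ_apply_of_notMem_right J hJ _ _ hb,
      embedJ_apply_of_notMem_right J hJ _ _ hb]

lemma embedJ_one : embedJ J hJ 1 = 1 := by
  refine eq_of_subJ_eq J hJ (by rw [subJ_embedJ, subJ_one]) ?_
  rintro a b (ha | hb)
  · exact embedJ_apply_of_notMem_left J hJ _ ha b
  · exact embedJ_apply_of_notMem_right J hJ _ a hb

lemma embedJ_conjTranspose : (embedJ J hJ S)ᴴ = embedJ J hJ Sᴴ := by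
  refine eq_of_subJ_eq J hJ (by rw [subJ_conjTranspose, subJ_embedJ, subJ_embedJ]) ?_
  rintro a b (ha | hb)
  · rw [conjTranspose_apply, embedJ_apply_of_notMem_right J hJ _ _ ha,
      embedJ_apply_of_notMem_left J hJ _ ha, ← conjTranspose_apply, conjTranspose_one]
  · rw [conjTranspose_apply, embedJ_apply_of_notMem_left J hJ _ hb,
      embedJ_apply_of_notMem_right J hJ _ _ hb, ← conjTranspose_apply, conjTranspose_one]

lemma inv_embedJ {S : Matrix (Fin k) (Fin k) ℂ} (hS : IsUnit S.det) :
    (embedJ J hJ S)⁻¹ = embedJ J hJ S⁻¹ :=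
  inv_eq_left_inv (by rw [embedJ_mul, nonsing_inv_mul _ hS, embedJ_one])

end Embedding

section PivotStep

variable {n k : ℕ} (J : Finset (Fin n)) (hJ : J.card = k) {S : Matrix (Fin k) (Fin k) ℂ}
  {B : Matrix (Fin n) (Fin n) ℂ}

lemma trace_subJ_mul_subJ (M N : Matrix (Fin n) (Fin n) ℂ) :
    trace (subJ J hJ M * subJ J hJ N) = ∑ i ∈ J, ∑ j ∈ J, M i j * N j i := by
  simp only [trace, diag_apply, mul_apply, subJ_apply]
  rw [← sum_orderIsoOfFin J hJ]
  exact sum_congr rfl fun x _ => sum_orderIsoOfFin J hJ fun j => M _ j * N j _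

def pivotIncrement (B : Matrix (Fin n) (Fin n) ℂ) (J : Finset (Fin n)) : ℝ :=
  (∑ p ∈ J.offDiag, B p.1 p.2 * B⁻¹ p.2 p.1).re

lemma sum_embedJ_conj_mul_apply_self (hS : IsUnit S.det) {M : Matrix (Fin n) (Fin n) ℂ}
    (hdiag : (Sᴴ * subJ J hJ M * S).IsDiag) (N : Matrix (Fin n) (Fin n) ℂ) :
    ∑ i, (embedJ J hJ Sᴴ * M * embedJ J hJ S) i i * (embedJ J hJ S⁻¹ * N * embedJ J hJ Sᴴ⁻¹) i i
      = ∑ i, M i i * N i i + ∑ p ∈ J.offDiag, M p.1 p.2 * N p.2 p.1 := by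
  set M' := embedJ J hJ Sᴴ * M * embedJ J hJ S
  set N' := embedJ J hJ S⁻¹ * N * embedJ J hJ Sᴴ⁻¹
  have hM' : subJ J hJ M' = Sᴴ * subJ J hJ M * S := by
    rw [subJ_mul_embedJ, subJ_embedJ_mul]
  have hN' : subJ J hJ N' = S⁻¹ * subJ J hJ N * Sᴴ⁻¹ := by
    rw [subJ_mul_embedJ, subJ_embedJ_mul]
  have hout : ∀ i ∈ Jᶜ, M' i i * N' i i = M i i * N i i := fun i hi => by
    have hi : i ∉ J := by simpa using hi
    simp only [M', N', mul_embedJ_apply_of_notMem J hJ _ _ _ hi,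
      embedJ_mul_apply_of_notMem J hJ _ _ hi]
  have hin : ∑ i ∈ J, M' i i * N' i i = ∑ i ∈ J, ∑ j ∈ J, M i j * N j i := by
    have hSH : IsUnit Sᴴ.det := by rw [det_conjTranspose]; exact hS.star
    rw [← sum_orderIsoOfFin J hJ, ← trace_subJ_mul_subJ J hJ, ← trace_mul_mul_mul_inv hSH hS,
      ← hM', ← hN', trace_mul_of_isDiag (hM' ▸ hdiag)]
    rfl
  rw [← sum_add_sum_compl J, sum_congr rfl hout, hin, sum_sum_eq_sum_add_sum_offDiag,
    ← sum_add_sum_compl J fun i => M i i * N i i]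
  abel

lemma conjTranspose_inv_embedJ_inv_mul_mul (hS : IsUnit S.det) :
    ((embedJ J hJ S⁻¹)⁻¹)ᴴ * B * (embedJ J hJ S⁻¹)⁻¹ = embedJ J hJ Sᴴ * B * embedJ J hJ S := by
  rw [inv_embedJ J hJ (isUnit_nonsing_inv_det _ hS), nonsing_inv_nonsing_inv _ hS,
    embedJ_conjTranspose]

lemma Matrix.PosDef.embedJ_conj (hB : B.PosDef) (hS : IsUnit S.det) :
    (embedJ J hJ Sᴴ * B * embedJ J hJ S).PosDef := by
  have hE : IsUnit (embedJ J hJ S) := (isUnit_iff_isUnit_det _).mpr <|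
    isUnit_det_of_right_inverse (by rw [embedJ_mul, mul_nonsing_inv _ hS, embedJ_one])
  rw [← embedJ_conjTranspose, ← star_eq_conjTranspose]
  exact hE.posDef_star_left_conjugate_iff.mpr hB

lemma Gamma_embedJ_conj (hB : B.PosDef) (hS : IsUnit S.det)
    (hdiag : (Sᴴ * subJ J hJ B * S).IsDiag) :
    Gamma (embedJ J hJ Sᴴ * B * embedJ J hJ S) = Gamma B + pivotIncrement B J := by
  have hSH : IsUnit Sᴴ.det := by rw [det_conjTranspose]; exact hS.star
  have hinv : (embedJ J hJ Sᴴ * B * embedJ J hJ S)⁻¹ =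
      embedJ J hJ S⁻¹ * B⁻¹ * embedJ J hJ Sᴴ⁻¹ := by
    rw [Matrix.mul_inv_rev, Matrix.mul_inv_rev, inv_embedJ J hJ hS, inv_embedJ J hJ hSH,
      Matrix.mul_assoc]
  rw [Gamma_eq_re_sum_mul_inv_apply_self (hB.embedJ_conj J hJ hS),
    Gamma_eq_re_sum_mul_inv_apply_self hB, hinv, sum_embedJ_conj_mul_apply_self J hJ hS hdiag,
    Complex.add_re, pivotIncrement]
  ring

end PivotStep

section Averaging

variable {n k : ℕ} {B : Matrix (Fin n) (Fin n) ℂ}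

lemma sum_pivotIncrement (hk : 2 ≤ k) (hB : B.PosDef) :
    ∑ J : PivotSet n k, pivotIncrement B J.1 = -((n - 2).choose (k - 2) : ℝ) * Gamma B := by
  rw [← sum_subtype (powersetCard k univ) (fun J => mem_powersetCard_univ) (pivotIncrement B)]
  simp only [pivotIncrement, ← Complex.re_sum]
  rw [sum_powersetCard_sum_offDiag hk, Fintype.card_fin, sum_offDiag_mul_apply,
    mul_nonsing_inv _ ((isUnit_iff_isUnit_det _).mp hB.isUnit), trace_one,
    Gamma_eq_re_sum_mul_inv_apply_self hB, Complex.re_nsmul, Complex.sub_re, Fintype.card_fin,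
    Complex.natCast_re, nsmul_eq_mul]
  ring

lemma mean_Gamma_add_pivotIncrement (hk : 2 ≤ k) (hkn : k ≤ n) (hB : B.PosDef) :
    (∑ J : PivotSet n k, (Gamma B + pivotIncrement B J.1)) / Fintype.card (PivotSet n k) =
      (1 - ((k : ℝ) * ((k : ℝ) - 1)) / ((n : ℝ) * ((n : ℝ) - 1))) * Gamma B := by
  have hN : (n.choose k : ℝ) ≠ 0 := by exact_mod_cast (Nat.choose_pos hkn).ne'
  have hn : (n : ℝ) * (n - 1) ≠ 0 := by
    have : (2 : ℝ) ≤ n := by exact_mod_cast hk.trans hkn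
    nlinarith
  have hpair : ((n - 2).choose (k - 2) : ℝ) = n.choose k * (k * (k - 1)) / (n * (n - 1)) := by
    rw [eq_div_iff hn]
    exact Nat.cast_choose_sub_two_mul hk
  rw [sum_add_distrib, sum_pivotIncrement hk hB, sum_const, card_univ, Fintype.card_finset_len,
    Fintype.card_fin, nsmul_eq_mul, hpair]
  field_simp
  ring

end Averaging

lemma sum_zpow_mul_prod_Icc_update_div_card {α : Type*} [Fintype α] {C : ℝ}
    {X : ℕ → (ℕ → α) → ℝ} (hX : ∀ s ω ω', (∀ r ≤ s, ω r = ω' r) → X s ω = X s ω')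
    (hmean : ∀ t ω, (∑ j, X (t + 1) (Function.update ω (t + 1) j)) / Fintype.card α = C)
    {t₁ t : ℕ} (ht : t₁ ≤ t) (ω : ℕ → α) :
    (∑ j, C ^ ((t₁ : ℤ) - 1 - ((t + 1 : ℕ) : ℤ)) *
        ∏ s ∈ Icc t₁ (t + 1), X s (Function.update ω (t + 1) j)) / Fintype.card α =
      C ^ ((t₁ : ℤ) - 1 - t) * ∏ s ∈ Icc t₁ t, X s ω := by
  have hpast : ∀ j, ∏ s ∈ Icc t₁ t, X s (Function.update ω (t + 1) j) = ∏ s ∈ Icc t₁ t, X s ω :=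
    fun j => prod_congr rfl fun s hs => hX s _ _ fun r hr =>
      Function.update_of_ne (by have := (mem_Icc.mp hs).2; omega) _ _
  have hpow : C ^ ((t₁ : ℤ) - 1 - ((t + 1 : ℕ) : ℤ)) * C = C ^ ((t₁ : ℤ) - 1 - t) := by
    rw [show (t₁ : ℤ) - 1 - t = (t₁ : ℤ) - 1 - ((t + 1 : ℕ) : ℤ) + 1 by push_cast; ring,
      zpow_add' (Or.inr (Or.inl (by push_cast; omega))), zpow_one]
  simp_rw [prod_Icc_succ_top (by omega : t₁ ≤ t + 1), hpast]
  rw [← mul_sum, ← mul_sum, mul_div_assoc, mul_div_assoc, hmean, ← hpow]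
  ring

/-- martingale behavior: in the finite-arithmetic two-sided process with
randomized size-`k` pivoting (adapted intermediate states `B̃^{(t+1/3)}, B̃^{(t+2/3)}`,
where `B̃^{(t+2/3)}` is an exact pivot step of `B̃^{(t+1/3)}` with the pivot `ω t`), for
every `t₁` the process `{C^{t₁−1−t} Y_{t₁,t}}_{t ≥ t₁}` with
`Y_{t₁,t} = Π_{s=t₁}^{t} Γ(B̃^{(s+2/3)})/Γ(B̃^{(s+1/3)})` and `C = 1 − k(k−1)/(n(n−1))`
is a nonnegative martingale with respect to the filtration generated by the pivots:
it is nonnegative, and its conditional expectation given the pivots through time `t`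
(i.e. the average over a fresh uniform pivot in position `t+1`) equals its value at `t`. -/
theorem martingale_behavior {n k : ℕ} (hk : 2 ≤ k) (hkn : k ≤ n)
    (B13 B23 : ℕ → (ℕ → PivotSet n k) → Matrix (Fin n) (Fin n) ℂ)
    (hadapt13 : ∀ (t : ℕ) (ω ω' : ℕ → PivotSet n k),
      (∀ s, s < t → ω s = ω' s) → B13 t ω = B13 t ω')
    (hadapt23 : ∀ (t : ℕ) (ω ω' : ℕ → PivotSet n k),
      (∀ s, s ≤ t → ω s = ω' s) → B23 t ω = B23 t ω')
    (hPD : ∀ t ω, (B13 t ω).PosDef)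
    (hpos : ∀ t ω, 0 < Gamma (B13 t ω))
    (hstep : ∀ (t : ℕ) (ω : ℕ → PivotSet n k), ∃ S : Matrix (Fin k) (Fin k) ℂ,
      IsUnit S.det ∧ (Sᴴ * subJ (ω t).1 (ω t).2 (B13 t ω) * S).IsDiag ∧
      B23 t ω = ((embedJ (ω t).1 (ω t).2 S⁻¹)⁻¹)ᴴ * B13 t ω * (embedJ (ω t).1 (ω t).2 S⁻¹)⁻¹)
    (t₁ : ℕ) :
    (∀ (t : ℕ) (ω : ℕ → PivotSet n k), t₁ ≤ t →
      0 ≤ (1 - ((k : ℝ) * ((k : ℝ) - 1)) / ((n : ℝ) * ((n : ℝ) - 1))) ^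
            ((t₁ : ℤ) - 1 - (t : ℤ)) *
          ∏ s ∈ Finset.Icc t₁ t, (Gamma (B23 s ω) / Gamma (B13 s ω))) ∧
    (∀ (t : ℕ) (ω : ℕ → PivotSet n k), t₁ ≤ t →
      (∑ j : PivotSet n k,
          (1 - ((k : ℝ) * ((k : ℝ) - 1)) / ((n : ℝ) * ((n : ℝ) - 1))) ^
              ((t₁ : ℤ) - 1 - ((t + 1 : ℕ) : ℤ)) *
            ∏ s ∈ Finset.Icc t₁ (t + 1),
              (Gamma (B23 s (Function.update ω (t + 1) j)) /
                Gamma (B13 s (Function.update ω (t + 1) j)))) /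
          (Fintype.card (PivotSet n k) : ℝ) =
        (1 - ((k : ℝ) * ((k : ℝ) - 1)) / ((n : ℝ) * ((n : ℝ) - 1))) ^
            ((t₁ : ℤ) - 1 - (t : ℤ)) *
          ∏ s ∈ Finset.Icc t₁ t, (Gamma (B23 s ω) / Gamma (B13 s ω))) := by
  have hpivot : ∀ t ω, (B23 t ω).PosDef ∧
      Gamma (B23 t ω) = Gamma (B13 t ω) + pivotIncrement (B13 t ω) (ω t).1 := fun t ω => by
    obtain ⟨S, hS, hdiag, hB23⟩ := hstep t ω
    rw [hB23, conjTranspose_inv_embedJ_inv_mul_mul _ _ hS]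
    exact ⟨(hPD t ω).embedJ_conj _ _ hS, Gamma_embedJ_conj _ _ (hPD t ω) hS hdiag⟩
  have hC : 0 ≤ 1 - ((k : ℝ) * ((k : ℝ) - 1)) / ((n : ℝ) * ((n : ℝ) - 1)) := by
    have h2k : (2 : ℝ) ≤ k := by exact_mod_cast hk
    have hkn' : (k : ℝ) ≤ n := by exact_mod_cast hkn
    rw [sub_nonneg]
    exact div_le_one_of_le₀ (by nlinarith) (by nlinarith)
  refine ⟨fun t ω _ => mul_nonneg (zpow_nonneg hC _) (prod_nonneg fun s _ =>
    div_nonneg (Gamma_nonneg (hpivot s ω).1) (hpos s ω).le), fun t ω ht => ?_⟩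
  refine sum_zpow_mul_prod_Icc_update_div_card (X := fun s ω => Gamma (B23 s ω) / Gamma (B13 s ω))
    (fun s ω ω' h => ?_) (fun t ω => ?_) ht ω
  · rw [hadapt13 s ω ω' fun r hr => h r hr.le, hadapt23 s ω ω' h]
  · have hpre : ∀ j, B13 (t + 1) (Function.update ω (t + 1) j) = B13 (t + 1) ω := fun j =>
      hadapt13 _ _ _ fun s hs => Function.update_of_ne hs.ne _ _
    simp_rw [(hpivot _ _).2, hpre, Function.update_self, ← sum_div]
    rw [div_right_comm, mean_Gamma_add_pivotIncrement hk hkn (hPD _ _),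
      mul_div_cancel_right₀ _ (hpos _ _).ne']
end
end
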